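/- Let L > 0, let φ : [0, L] → ℝ be continuous, and let γ : [0, L] → ℝ² be differentiable with γ'(s) = (cos φ(s), sin φ(s)) for all s ∈ [0, L]. Then the controllability Gramian W := ∫₀ᴸ G(s) G(s)ᵀ ds satisfies det(W) > 0; in particular W is invertible. -/

import Mathlib

open Matrix Real

/-- The planar rotation matrix `R(θ)`. -/
noncomputable def rot (θ : ℝ) : Matrix (Fin 2) (Fin 2) ℝ :=
  !![Real.cos θ, -Real.sin θ; Real.sin θ, Real.cos θ]

/-- `γ⊥ = R(π/2) γ`. -/
noncomputable def gperp (γ : Fin 2 → ℝ) : Fin 2 → ℝ :=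
  (rot (Real.pi / 2)).mulVec γ

/-- The grasp map matrix `G`: its first two rows form `R(φ)`, its third row is `(γ⊥)ᵀ R(φ)`. -/
noncomputable def graspMap (φ : ℝ) (γ : Fin 2 → ℝ) : Matrix (Fin 3) (Fin 2) ℝ :=
  Matrix.of fun i j =>
    if h : (i : ℕ) < 2 then rot φ ⟨i, h⟩ j
    else Matrix.vecMul (gperp γ) (rot φ) j

/-!
Since `R(φ)` is orthogonal, `G Gᵀ = [[I₂, γ⊥], [γ⊥ᵀ, |γ|²]]` does not depend on `φ`.
Integrating, `det W = L (L ∫|γ|² - |∫γ|²)`, and the variance identity rewrites the bracket as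
`L ∫|γ - γ̄|²` with `γ̄ = (1/L) ∫γ`. This is positive because `γ` is continuous and not
constant, its derivative being a unit vector.
-/

open MeasureTheory Set

lemma graspMap_mul_transpose (φ : ℝ) (v : Fin 2 → ℝ) :
    graspMap φ v * (graspMap φ v)ᵀ =
      !![1, 0, -v 1; 0, 1, v 0; -v 1, v 0, v 0 ^ 2 + v 1 ^ 2] := by
  have h := sin_sq_add_cos_sq φ
  ext i j
  fin_cases i <;> fin_cases j <;>
    simp [graspMap, gperp, rot, mul_apply, vecMul, mulVec, Fin.sum_univ_two, dotProduct] <;>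
    grind

lemma integral_graspMap_mul_transpose (L : ℝ) (φ : ℝ → ℝ) (γ : ℝ → Fin 2 → ℝ) :
    (Matrix.of fun i j =>
        ∫ s in (0:ℝ)..L, (graspMap (φ s) (γ s) * (graspMap (φ s) (γ s))ᵀ) i j :
        Matrix (Fin 3) (Fin 3) ℝ) =
      !![L, 0, -∫ s in (0:ℝ)..L, γ s 1;
        0, L, ∫ s in (0:ℝ)..L, γ s 0;
        -∫ s in (0:ℝ)..L, γ s 1, ∫ s in (0:ℝ)..L, γ s 0,
          ∫ s in (0:ℝ)..L, (γ s 0 ^ 2 + γ s 1 ^ 2)] := by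
  ext i j
  simp only [of_apply, graspMap_mul_transpose]
  fin_cases i <;> fin_cases j <;> simp [intervalIntegral.integral_neg]

lemma integral_sq_sub_average {g : ℝ → ℝ} {a b : ℝ} (hab : a ≠ b)
    (hg : IntervalIntegrable g volume a b)
    (hg2 : IntervalIntegrable (fun s => g s ^ 2) volume a b) :
    (b - a) * ∫ s in a..b, (g s - (∫ t in a..b, g t) / (b - a)) ^ 2 =
      (b - a) * (∫ s in a..b, g s ^ 2) - (∫ s in a..b, g s) ^ 2 := by
  set m := (∫ t in a..b, g t) / (b - a) with hm
  have hexpand : (fun s => (g s - m) ^ 2) = fun s => g s ^ 2 - 2 * m * g s + m ^ 2 := by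
    funext s; ring
  rw [hexpand, intervalIntegral.integral_add (hg2.sub (hg.const_mul _)) intervalIntegrable_const,
    intervalIntegral.integral_sub hg2 (hg.const_mul _), intervalIntegral.integral_const_mul,
    intervalIntegral.integral_const, hm, smul_eq_mul]
  have : b - a ≠ 0 := sub_ne_zero.2 hab.symm
  field_simp
  ring

lemma exists_ne_of_hasDerivWithinAt_Icc {E : Type*} [NormedAddCommGroup E] [NormedSpace ℝ E]
    {f : ℝ → E} {f' : E} {a b x : ℝ} (hab : a < b) (hx : x ∈ Icc a b)
    (hf : HasDerivWithinAt f f' (Icc a b) x) (hf' : f' ≠ 0) (c : E) :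
    ∃ s ∈ Icc a b, f s ≠ c := by
  by_contra! hconst
  have hzero : HasDerivWithinAt f 0 (Icc a b) x :=
    (hasDerivWithinAt_const x _ c).congr hconst (hconst x hx)
  exact hf' ((uniqueDiffOn_Icc hab x hx).eq_deriv _ hf hzero)

lemma sq_integral_add_sq_integral_lt {γ : ℝ → Fin 2 → ℝ} {L : ℝ} (hL : 0 < L)
    (hγ : ContinuousOn γ (Icc 0 L)) (hne : ∀ c, ∃ s ∈ Icc 0 L, γ s ≠ c) :
    (∫ s in (0:ℝ)..L, γ s 0) ^ 2 + (∫ s in (0:ℝ)..L, γ s 1) ^ 2 <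
      L * ∫ s in (0:ℝ)..L, (γ s 0 ^ 2 + γ s 1 ^ 2) := by
  set A := ∫ s in (0:ℝ)..L, γ s 0
  set B := ∫ s in (0:ℝ)..L, γ s 1
  have hγ0 : ContinuousOn (fun s => γ s 0) (Icc 0 L) := (continuous_apply 0).comp_continuousOn hγ
  have hγ1 : ContinuousOn (fun s => γ s 1) (Icc 0 L) := (continuous_apply 1).comp_continuousOn hγ
  have hdev0 : ContinuousOn (fun s => (γ s 0 - A / L) ^ 2) (Icc 0 L) :=
    (hγ0.sub continuousOn_const).pow 2
  have hdev1 : ContinuousOn (fun s => (γ s 1 - B / L) ^ 2) (Icc 0 L) :=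
    (hγ1.sub continuousOn_const).pow 2
  obtain ⟨s₀, hs₀, hne₀⟩ := hne ![A / L, B / L]
  have hdev_pos : 0 < (γ s₀ 0 - A / L) ^ 2 + (γ s₀ 1 - B / L) ^ 2 := by
    by_contra! hle
    refine hne₀ (funext fun i => ?_)
    fin_cases i <;> simp <;> nlinarith [sq_nonneg (γ s₀ 0 - A / L), sq_nonneg (γ s₀ 1 - B / L)]
  have hvar_pos : 0 < ∫ s in (0:ℝ)..L, ((γ s 0 - A / L) ^ 2 + (γ s 1 - B / L) ^ 2) :=
    intervalIntegral.integral_pos hL (hdev0.add hdev1) (fun _ _ => by positivity) ⟨s₀, hs₀, hdev_pos⟩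
  have hsq0 : ContinuousOn (fun s => γ s 0 ^ 2) (Icc 0 L) := hγ0.pow 2
  have hsq1 : ContinuousOn (fun s => γ s 1 ^ 2) (Icc 0 L) := hγ1.pow 2
  have hvar0 := integral_sq_sub_average hL.ne (hγ0.intervalIntegrable_of_Icc hL.le)
    (hsq0.intervalIntegrable_of_Icc hL.le)
  have hvar1 := integral_sq_sub_average hL.ne (hγ1.intervalIntegrable_of_Icc hL.le)
    (hsq1.intervalIntegrable_of_Icc hL.le)
  rw [sub_zero] at hvar0 hvar1
  rw [intervalIntegral.integral_add (hdev0.intervalIntegrable_of_Icc hL.le)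
    (hdev1.intervalIntegrable_of_Icc hL.le)] at hvar_pos
  rw [intervalIntegral.integral_add (hsq0.intervalIntegrable_of_Icc hL.le)
    (hsq1.intervalIntegrable_of_Icc hL.le)]
  nlinarith [mul_pos hL hvar_pos]

theorem stmt_5_general (L : ℝ) (hL : 0 < L) (φ : ℝ → ℝ) (γ : ℝ → (Fin 2 → ℝ))
    (hγ : ∀ s ∈ Set.Icc (0:ℝ) L,
      HasDerivWithinAt γ ![Real.cos (φ s), Real.sin (φ s)] (Set.Icc 0 L) s) :
    0 < (Matrix.of fun i j =>
          ∫ s in (0:ℝ)..L, (graspMap (φ s) (γ s) * (graspMap (φ s) (γ s))ᵀ) i j :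
          Matrix (Fin 3) (Fin 3) ℝ).det ∧
    IsUnit (Matrix.of fun i j =>
          ∫ s in (0:ℝ)..L, (graspMap (φ s) (γ s) * (graspMap (φ s) (γ s))ᵀ) i j :
          Matrix (Fin 3) (Fin 3) ℝ) := by
  have hγc : ContinuousOn γ (Icc 0 L) := fun s hs => (hγ s hs).continuousWithinAt
  have h0 : (0 : ℝ) ∈ Icc 0 L := ⟨le_rfl, hL.le⟩
  have hunit : ![cos (φ 0), sin (φ 0)] ≠ 0 := fun h => by
    have := sin_sq_add_cos_sq (φ 0)
    simp_all [funext_iff, Fin.forall_fin_two]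
  have hlt := sq_integral_add_sq_integral_lt hL hγc
    (exists_ne_of_hasDerivWithinAt_Icc hL h0 (hγ 0 h0) hunit)
  rw [integral_graspMap_mul_transpose, isUnit_iff_isUnit_det, isUnit_iff_ne_zero]
  refine (fun hdet => ⟨hdet, hdet.ne'⟩) ?_
  rw [det_fin_three]
  simp only [Fin.isValue, of_apply, cons_val', cons_val_zero, cons_val_fin_one, cons_val_one,
    cons_val, mul_zero, zero_mul, sub_zero, mul_neg, neg_zero, add_zero, neg_mul, neg_neg]
  nlinarith [mul_pos hL (sub_pos.2 hlt)]

/-- For a unit-speed closed-or-open curve with continuous angle function, the controllability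
Gramian `W = ∫₀ᴸ G Gᵀ ds` (entrywise integral) has positive determinant; in particular `W`
is invertible. -/
theorem stmt_5 (L : ℝ) (hL : 0 < L) (φ : ℝ → ℝ) (γ : ℝ → (Fin 2 → ℝ))
    (hφ : ContinuousOn φ (Set.Icc 0 L))
    (hγ : ∀ s ∈ Set.Icc (0:ℝ) L,
      HasDerivWithinAt γ ![Real.cos (φ s), Real.sin (φ s)] (Set.Icc 0 L) s) :
    0 < (Matrix.of fun i j =>
          ∫ s in (0:ℝ)..L, (graspMap (φ s) (γ s) * (graspMap (φ s) (γ s))ᵀ) i j :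
          Matrix (Fin 3) (Fin 3) ℝ).det ∧
    IsUnit (Matrix.of fun i j =>
          ∫ s in (0:ℝ)..L, (graspMap (φ s) (γ s) * (graspMap (φ s) (γ s))ᵀ) i j :
          Matrix (Fin 3) (Fin 3) ℝ) :=
  stmt_5_general L hL φ γ hγ
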